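/- arXiv:1407.3860 — 3 statements merged into one kernel-verified Lean document; each statement's English description precedes it below -/
import Mathlib

section
/- Let Φ : X → Prop and E' be the equivalence relation on Set X given by: E'(A,B) iff (A and B are singletons {x}, {y} respectively with Φ(x) ↔ Φ(y)) or (neither is a singleton). Suppose ∂' : Set X → X satisfies ∂'(A) = ∂'(B) ↔ E'(A,B), and suppose Φ(x₀) holds for some x₀. Then {x : X | Φ(x)} = {x : X | ∂'({x}) = ∂'({x₀})}. -/
/-- The equivalence relation `E'` on `Set X`. -/
def SingletonRel {X : Type*} (Φ : X → Prop) (A B : Set X) : Prop :=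
  (∃ x y : X, A = {x} ∧ B = {y} ∧ (Φ x ↔ Φ y)) ∨ (¬ (∃ x : X, A = {x}) ∧ ¬ (∃ y : X, B = {y}))

theorem singletonRel_singleton_iff {X : Type*} {Φ : X → Prop} {x y : X} :
    SingletonRel Φ {x} {y} ↔ (Φ x ↔ Φ y) := by
  constructor
  · rintro (⟨a, b, ha, hb, hab⟩ | ⟨hx, -⟩)
    · rwa [Set.singleton_eq_singleton_iff.mp ha, Set.singleton_eq_singleton_iff.mp hb]
    · exact absurd ⟨x, rfl⟩ hx
  · exact fun h => Or.inl ⟨x, y, rfl, rfl, h⟩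

theorem abstraction_recovers_comprehension (X : Type*) (Φ : X → Prop)
    (d' : Set X → X)
    (hd' : ∀ A B : Set X, d' A = d' B ↔
      ((∃ x y : X, A = {x} ∧ B = {y} ∧ (Φ x ↔ Φ y)) ∨
       (¬ (∃ x : X, A = {x}) ∧ ¬ (∃ y : X, B = {y}))))
    (x₀ : X) (hx₀ : Φ x₀) :
    {x : X | Φ x} = {x : X | d' {x} = d' {x₀}} := by
  ext x
  have key : d' {x} = d' {x₀} ↔ (Φ x ↔ Φ x₀) := (hd' {x} {x₀}).trans singletonRel_singleton_iff
  simp only [Set.mem_ofPred_eq, key, iff_true_right hx₀]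
end

section
/- Let Φ : X × Set X → Prop, let G : Set X be nonempty, suppose Φ(x₀, G) holds for some x₀, and let E be the equivalence relation on Set (X × X) defined via Φ (with E(R,S) iff both are uniquely {x}×G', {y}×H' with Φ(x,G') ↔ Φ(y,H'), or neither is uniquely such a product). If ∂ : Set (X × X) → X satisfies ∂(R) = ∂(S) ↔ E(R,S), then for all x: Φ(x, G) holds iff ∂({x} × G) = ∂({x₀} × G). -/
/-! Since `G` is nonempty, `{x} ×ˢ G` determines both `x` and `G`, so it is uniquely a product and
`E({x} ×ˢ G, {x₀} ×ˢ G)` reduces to `Φ (x, G) ↔ Φ (x₀, G)`, which holds iff `Φ (x, G)`. -/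

namespace Set

variable {X : Type*}

lemma singleton_prod_eq_singleton_prod_iff {x y : X} {G H : Set X} (hG : G.Nonempty) :
    ({x} : Set X) ×ˢ G = {y} ×ˢ H ↔ x = y ∧ G = H := by
  rw [prod_eq_prod_iff_of_nonempty ((singleton_nonempty x).prod hG), singleton_eq_singleton_iff]

lemma existsUnique_singleton_prod_eq (x : X) {G : Set X} (hG : G.Nonempty) :
    ∃! p : X × Set X, ({x} : Set X) ×ˢ G = {p.1} ×ˢ p.2 := by
  refine ⟨(x, G), rfl, ?_⟩
  rintro ⟨y, H⟩ h
  obtain ⟨rfl, rfl⟩ := (singleton_prod_eq_singleton_prod_iff hG).1 h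
  rfl

end Set

theorem abstraction_main_computation (X : Type*) (Φ : X × Set X → Prop)
    (G : Set X) (hG : G.Nonempty) (x₀ : X) (hx₀ : Φ (x₀, G))
    (d : Set (X × X) → X)
    (hd : ∀ R S : Set (X × X), d R = d S ↔
      (((∃! p : X × Set X, R = {p.1} ×ˢ p.2) ∧
        (∃! p : X × Set X, S = {p.1} ×ˢ p.2) ∧
        (∀ (x : X) (G' : Set X) (y : X) (H' : Set X),
          R = {x} ×ˢ G' → S = {y} ×ˢ H' → (Φ (x, G') ↔ Φ (y, H')))) ∨
       (¬ (∃! p : X × Set X, R = {p.1} ×ˢ p.2) ∧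
        ¬ (∃! p : X × Set X, S = {p.1} ×ˢ p.2)))) :
    ∀ x : X, Φ (x, G) ↔ d (({x} : Set X) ×ˢ G) = d (({x₀} : Set X) ×ˢ G) := by
  intro x
  rw [hd]
  constructor
  · intro hx
    refine .inl ⟨Set.existsUnique_singleton_prod_eq x hG, Set.existsUnique_singleton_prod_eq x₀ hG,
      fun a G' b H' ha hb => ?_⟩
    obtain ⟨rfl, rfl⟩ := (Set.singleton_prod_eq_singleton_prod_iff hG).1 ha
    obtain ⟨rfl, rfl⟩ := (Set.singleton_prod_eq_singleton_prod_iff hG).1 hb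
    exact iff_of_true hx hx₀
  · rintro (⟨-, -, hΦ⟩ | ⟨not_unique, -⟩)
    · exact (hΦ x G x₀ G rfl rfl).2 hx₀
    · exact absurd (Set.existsUnique_singleton_prod_eq x hG) not_unique
end

section
/- Suppose for every predicate Φ : X → Prop there exists an abstraction operator ∂_Φ : Set X → X for the equivalence relation E'_Φ (where E'_Φ(A,B) iff A = {x}, B = {y} with Φ(x) ↔ Φ(y), or neither A nor B is a singleton). Then for every predicate Φ with a witness x₀ satisfying Φ(x₀), the set {x | Φ(x)} is definable as a preimage: {x | Φ(x)} = (fun x => ∂_Φ({x}))⁻¹' {∂_Φ({x₀})}. -/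
theorem abstraction_family_yields_comprehension (X : Type*)
    (d : (X → Prop) → Set X → X)
    (hd : ∀ (Φ : X → Prop) (A B : Set X), d Φ A = d Φ B ↔
      ((∃ x y : X, A = {x} ∧ B = {y} ∧ (Φ x ↔ Φ y)) ∨
       (¬ (∃ x : X, A = {x}) ∧ ¬ (∃ y : X, B = {y})))) :
    ∀ (Φ : X → Prop) (x₀ : X), Φ x₀ →
      {x : X | Φ x} = (fun x : X => d Φ {x}) ⁻¹' {d Φ {x₀}} := by
  intro Φ x₀ h₀
  ext x
  calc Φ x ↔ (Φ x ↔ Φ x₀) := (iff_true_right h₀).symm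
    _ ↔ SingletonRel Φ {x} {x₀} := singletonRel_singleton_iff.symm
    _ ↔ d Φ {x} = d Φ {x₀} := (hd Φ {x} {x₀}).symm
end
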